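/- arXiv:2307.10572 — 2 statements merged into one kernel-verified Lean document; each statement's English description precedes it below -/
import Mathlib

section
/- Consider a multi-layer ScBM with population matrices P_l = ρ Y B_l Zᵀ, and suppose Σ_{l=1}^L B_lᵀ B_l has rank K' < K_z (the rank-deficient case). Let V ∈ ℝ^{n×K'} be any matrix with orthonormal columns and Λ a K'×K' invertible diagonal matrix such that Σ_{l=1}^L P_lᵀ P_l = V Λ Vᵀ. Then: (i) for all i, j with Z_{i∗} = Z_{j∗}, one has V_{i∗} = V_{j∗}; (ii) if the rows of Δ_z^{-1} Q^C are mutually distinct and there is ξ_n > 0 with min_{1≤k≠k'≤K_z} ‖Q^C_{k∗}/√(n_k^z) − Q^C_{k'∗}/√(n_{k'}^z)‖₂ ≥ ξ_n, then for all i, j with Z_{i∗} ≠ Z_{j∗}, one has ‖V_{i∗} − V_{j∗}‖₂ ≥ ξ_n. -/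
/-!
Since `Zᵀ Z = Δ_z²`, the matrix `X := Z Δ_z⁻¹ Q^C` has orthonormal columns, and
`∑ P_lᵀ P_l = ρ² Z (∑ B_lᵀ Δ_y² B_l) Zᵀ = X (ρ² D^C) Xᵀ`. Two column-orthonormal factorizations
of one matrix whose middle factor is an invertible diagonal differ by an orthogonal matrix `W`,
so `V = X W`. The `i`-th row of `X` is the row of `Δ_z⁻¹ Q^C` indexed by the column cluster of `i`,
and right multiplication by `W` preserves distances between rows.
-/

open Matrix Finset
open scoped BigOperators Classical

noncomputable section

/-- Membership matrix associated with a cluster assignment `g`. -/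
def memb {n K : ℕ} (g : Fin n → Fin K) : Matrix (Fin n) (Fin K) ℝ :=
  Matrix.of fun i k => if g i = k then 1 else 0

/-- Size of cluster `k` under assignment `g`. -/
def csize {n K : ℕ} (g : Fin n → Fin K) (k : Fin K) : ℕ :=
  (Finset.univ.filter fun i => g i = k).card

/-- Diagonal matrix Δ = diag(√n_1, …, √n_K). -/
def Dmat {n K : ℕ} (g : Fin n → Fin K) : Matrix (Fin K) (Fin K) ℝ :=
  Matrix.diagonal fun k => Real.sqrt (csize g k)

/-- Diagonal matrix Δ⁻¹ = diag(1/√n_1, …, 1/√n_K). -/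
def DmatInv {n K : ℕ} (g : Fin n → Fin K) : Matrix (Fin K) (Fin K) ℝ :=
  Matrix.diagonal fun k => (Real.sqrt (csize g k))⁻¹

/-- Euclidean distance between the `i`-th and `j`-th rows of `M`. -/
def rowDist {n K : ℕ} (M : Matrix (Fin n) (Fin K) ℝ) (i j : Fin n) : ℝ :=
  Real.sqrt (∑ m, (M i m - M j m) ^ 2)

lemma exists_eq_mul_of_mul_diagonal_mul_transpose_eq {𝕜 m k : Type*} [Field 𝕜] [Fintype m]
    [Fintype k] [DecidableEq k] {V X : Matrix m k 𝕜}
    (hV : Vᵀ * V = 1) (hX : Xᵀ * X = 1) {d e : k → 𝕜} (hd : ∀ a, d a ≠ 0)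
    (h : V * diagonal d * Vᵀ = X * diagonal e * Xᵀ) :
    ∃ W : Matrix k k 𝕜, V = X * W ∧ W * Wᵀ = 1 := by
  have hdd : diagonal d * diagonal (fun a => (d a)⁻¹) = 1 := by
    rw [diagonal_mul_diagonal, ← diagonal_one]
    exact congrArg diagonal (funext fun a => mul_inv_cancel₀ (hd a))
  have hVX : V = X * (diagonal e * Xᵀ * V * diagonal fun a => (d a)⁻¹) := by
    calc V = V * diagonal d * (Vᵀ * V) * diagonal (fun a => (d a)⁻¹) := by
          rw [hV, Matrix.mul_one, Matrix.mul_assoc, hdd, Matrix.mul_one]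
      _ = _ := by rw [← Matrix.mul_assoc, h]; simp only [Matrix.mul_assoc]
  have hXXV : X * (Xᵀ * V) = V := by
    obtain ⟨W, hW⟩ : ∃ W, V = X * W := ⟨_, hVX⟩
    rw [hW, ← Matrix.mul_assoc Xᵀ, hX, Matrix.one_mul]
  refine ⟨Xᵀ * V, hXXV.symm, mul_eq_one_comm.mp ?_⟩
  calc (Xᵀ * V)ᵀ * (Xᵀ * V) = Vᵀ * (X * (Xᵀ * V)) := by
        rw [transpose_mul, transpose_transpose]; simp only [Matrix.mul_assoc]
    _ = 1 := by rw [hXXV, hV]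

lemma dotProduct_vecMul_self_of_mul_transpose_eq_one {R k : Type*} [CommRing R] [Fintype k]
    [DecidableEq k] {W : Matrix k k R} (hW : W * Wᵀ = 1) (v : k → R) :
    v ᵥ* W ⬝ᵥ v ᵥ* W = v ⬝ᵥ v := by
  rw [← dotProduct_mulVec, ← vecMul_transpose, vecMul_vecMul, hW, vecMul_one]

lemma rowDist_eq_sqrt_dotProduct {n K : ℕ} (M : Matrix (Fin n) (Fin K) ℝ) (i j : Fin n) :
    rowDist M i j = Real.sqrt ((M i - M j) ⬝ᵥ (M i - M j)) := by
  simp only [rowDist, dotProduct, Pi.sub_apply, sq]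

lemma rowDist_mul_of_mul_transpose_eq_one {n K : ℕ} (A : Matrix (Fin n) (Fin K) ℝ)
    {W : Matrix (Fin K) (Fin K) ℝ} (hW : W * Wᵀ = 1) (i j : Fin n) :
    rowDist (A * W) i j = rowDist A i j := by
  rw [rowDist_eq_sqrt_dotProduct, rowDist_eq_sqrt_dotProduct, mul_apply_eq_vecMul,
    mul_apply_eq_vecMul, ← sub_vecMul, dotProduct_vecMul_self_of_mul_transpose_eq_one hW]

section Membership

variable {n K : ℕ}

lemma memb_mul_apply {m : ℕ} (g : Fin n → Fin K) (A : Matrix (Fin K) (Fin m) ℝ) (i : Fin n) :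
    (memb g * A) i = A (g i) := by
  ext j
  simp [memb, mul_apply]

lemma memb_eq_memb_iff (g : Fin n → Fin K) {i j : Fin n} : memb g i = memb g j ↔ g i = g j := by
  refine ⟨fun h => ?_, fun h => funext fun k => by simp [memb, h]⟩
  simpa [memb, eq_comm] using congrFun h (g i)

lemma rowDist_memb_mul {m : ℕ} (g : Fin n → Fin K) (R : Matrix (Fin K) (Fin m) ℝ) (i j : Fin n) :
    rowDist (memb g * R) i j = Real.sqrt (∑ p, (R (g i) p - R (g j) p) ^ 2) := by
  simp only [rowDist, memb_mul_apply]

lemma transpose_memb_mul_memb (g : Fin n → Fin K) :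
    (memb g)ᵀ * memb g = diagonal fun k => (csize g k : ℝ) := by
  ext k k'
  simp only [mul_apply, transpose_apply, memb, of_apply, diagonal_apply, mul_ite, mul_one,
    mul_zero]
  split_ifs with h
  · subst h
    simp only [csize, ← ite_and, and_self, Finset.sum_boole]
  · exact Finset.sum_eq_zero fun i _ => by split_ifs <;> simp_all

lemma Dmat_sq (g : Fin n → Fin K) : Dmat g ^ 2 = (memb g)ᵀ * memb g := by
  rw [transpose_memb_mul_memb, Dmat, sq, diagonal_mul_diagonal]
  exact congrArg diagonal (funext fun k => Real.mul_self_sqrt (Nat.cast_nonneg _))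

lemma DmatInv_mul_Dmat {g : Fin n → Fin K} (hg : ∀ k, 0 < csize g k) :
    DmatInv g * Dmat g = 1 := by
  rw [DmatInv, Dmat, diagonal_mul_diagonal, ← diagonal_one]
  refine congrArg diagonal (funext fun k => inv_mul_cancel₀ ?_)
  exact (Real.sqrt_pos.mpr (Nat.cast_pos.mpr (hg k))).ne'

lemma DmatInv_mul_apply {m : ℕ} (g : Fin n → Fin K) (Q : Matrix (Fin K) (Fin m) ℝ) (k : Fin K)
    (p : Fin m) : (DmatInv g * Q) k p = Q k p / Real.sqrt (csize g k) := by
  rw [DmatInv, diagonal_mul, div_eq_inv_mul]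

lemma transpose_mul_self_memb_mul_DmatInv {g : Fin n → Fin K} (hg : ∀ k, 0 < csize g k) :
    (memb g * DmatInv g)ᵀ * (memb g * DmatInv g) = 1 := by
  have hDD : Dmat g * DmatInv g = 1 := mul_eq_one_comm.mp (DmatInv_mul_Dmat hg)
  calc (memb g * DmatInv g)ᵀ * (memb g * DmatInv g)
      = DmatInv g * ((memb g)ᵀ * memb g) * DmatInv g := by
        rw [transpose_mul, DmatInv, diagonal_transpose]; simp only [Matrix.mul_assoc]
    _ = (DmatInv g * Dmat g) * (Dmat g * DmatInv g) := by
        rw [← Dmat_sq, sq]; simp only [Matrix.mul_assoc]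
    _ = 1 := by rw [DmatInv_mul_Dmat hg, hDD, Matrix.mul_one]

lemma transpose_mul_self_memb_mul_DmatInv_mul {m : ℕ} {g : Fin n → Fin K}
    (hg : ∀ k, 0 < csize g k) {Q : Matrix (Fin K) (Fin m) ℝ} (hQ : Qᵀ * Q = 1) :
    (memb g * (DmatInv g * Q))ᵀ * (memb g * (DmatInv g * Q)) = 1 := by
  calc (memb g * (DmatInv g * Q))ᵀ * (memb g * (DmatInv g * Q))
      = Qᵀ * ((memb g * DmatInv g)ᵀ * (memb g * DmatInv g)) * Q := by
        simp only [transpose_mul, Matrix.mul_assoc]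
    _ = 1 := by rw [transpose_mul_self_memb_mul_DmatInv hg, Matrix.mul_one, hQ]

end Membership

lemma transpose_smul_mul_mul_transpose_mul_self {R a b c : Type*} [CommRing R] [Fintype a]
    [Fintype b] [Fintype c] (ρ : R) (Y : Matrix a b R) (B : Matrix b c R) (Z : Matrix a c R) :
    (ρ • (Y * B * Zᵀ))ᵀ * (ρ • (Y * B * Zᵀ)) = ρ ^ 2 • (Z * (Bᵀ * (Yᵀ * Y) * B) * Zᵀ) := by
  rw [transpose_smul, smul_mul_smul_comm, ← sq]
  simp only [transpose_mul, transpose_transpose, Matrix.mul_assoc]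

lemma sum_transpose_mul_self_eq_of_eigen {n L Ky Kz K' : ℕ} {ρ : ℝ} {gy : Fin n → Fin Ky}
    {gz : Fin n → Fin Kz} (hnz : ∀ k, 0 < csize gz k) {B : Fin L → Matrix (Fin Ky) (Fin Kz) ℝ}
    {P : Fin L → Matrix (Fin n) (Fin n) ℝ} (hP : ∀ l, P l = ρ • (memb gy * B l * (memb gz)ᵀ))
    {QC : Matrix (Fin Kz) (Fin K') ℝ} {dC : Fin K' → ℝ}
    (hQdec : Dmat gz * (∑ l, (B l)ᵀ * (Dmat gy) ^ 2 * B l) * Dmat gz =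
      QC * diagonal dC * QCᵀ) :
    ∑ l, (P l)ᵀ * P l =
      memb gz * (DmatInv gz * QC) * diagonal (ρ ^ 2 • dC) * (memb gz * (DmatInv gz * QC))ᵀ := by
  set M := ∑ l, (B l)ᵀ * (Dmat gy) ^ 2 * B l
  set U := memb gz * DmatInv gz
  have hZ : memb gz = U * Dmat gz := by rw [Matrix.mul_assoc, DmatInv_mul_Dmat hnz, Matrix.mul_one]
  have hDT : (Dmat gz)ᵀ = Dmat gz := diagonal_transpose _
  calc ∑ l, (P l)ᵀ * P l = ρ ^ 2 • (memb gz * M * (memb gz)ᵀ) := by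
        simp only [hP, transpose_smul_mul_mul_transpose_mul_self, ← Dmat_sq, ← Finset.smul_sum,
          ← Matrix.sum_mul, ← Matrix.mul_sum, M]
    _ = ρ ^ 2 • (U * (Dmat gz * M * Dmat gz) * Uᵀ) := by
        rw [hZ, transpose_mul, hDT]; simp only [Matrix.mul_assoc]
    _ = _ := by
        rw [hQdec, diagonal_smul, Matrix.mul_smul, Matrix.smul_mul]
        simp only [transpose_mul, Matrix.mul_assoc, U]

theorem stmt4_general
    (n L Ky Kz K' : ℕ)
    (ρ : ℝ)
    (gy : Fin n → Fin Ky) (gz : Fin n → Fin Kz)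
    (hnz : ∀ k, 0 < csize gz k)
    (B : Fin L → Matrix (Fin Ky) (Fin Kz) ℝ)
    (P : Fin L → Matrix (Fin n) (Fin n) ℝ)
    (hP : ∀ l, P l = ρ • (memb gy * B l * (memb gz)ᵀ))
    -- eigendecomposition ∑ P_lᵀ P_l = V Λ Vᵀ with V column-orthonormal, Λ invertible diagonal
    (V : Matrix (Fin n) (Fin K') ℝ) (hVorth : Vᵀ * V = 1)
    (d : Fin K' → ℝ) (hd : ∀ m, d m ≠ 0)
    (hdecomp : ∑ l, (P l)ᵀ * P l = V * Matrix.diagonal d * Vᵀ)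
    -- eigendecomposition Δ_z (∑ B_lᵀ Δ_y² B_l) Δ_z = Q^C D^C (Q^C)ᵀ,
    -- Q^C column-orthonormal, D^C invertible diagonal
    (QC : Matrix (Fin Kz) (Fin K') ℝ) (hQorth : QCᵀ * QC = 1)
    (dC : Fin K' → ℝ)
    (hQdec : Dmat gz * (∑ l, (B l)ᵀ * (Dmat gy) ^ 2 * B l) * Dmat gz =
      QC * Matrix.diagonal dC * QCᵀ) :
    -- (i)
    (∀ i j : Fin n, memb gz i = memb gz j → V i = V j) ∧
    -- (ii)
    (∀ ξ : ℝ, 0 < ξ →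
      (∀ k k' : Fin Kz, k ≠ k' → (DmatInv gz * QC) k ≠ (DmatInv gz * QC) k') →
      (∀ k k' : Fin Kz, k ≠ k' →
        ξ ≤ Real.sqrt (∑ m, (QC k m / Real.sqrt (csize gz k) -
              QC k' m / Real.sqrt (csize gz k')) ^ 2)) →
      ∀ i j : Fin n, memb gz i ≠ memb gz j → ξ ≤ rowDist V i j) := by
  obtain ⟨W, hVW, hW⟩ := exists_eq_mul_of_mul_diagonal_mul_transpose_eq hVorth
    (transpose_mul_self_memb_mul_DmatInv_mul hnz hQorth) hd
    (hdecomp.symm.trans (sum_transpose_mul_self_eq_of_eigen hnz hP hQdec))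
  refine ⟨fun i j hij => ?_, fun ξ _ _ hsep i j hij => ?_⟩
  · rw [hVW, Matrix.mul_assoc, memb_mul_apply, memb_mul_apply, (memb_eq_memb_iff gz).mp hij]
  · calc ξ ≤ Real.sqrt (∑ m, (QC (gz i) m / Real.sqrt (csize gz (gz i)) -
              QC (gz j) m / Real.sqrt (csize gz (gz j))) ^ 2) :=
          hsep _ _ (mt (memb_eq_memb_iff gz).mpr hij)
      _ = rowDist (memb gz * (DmatInv gz * QC)) i j := by
          simp only [rowDist_memb_mul, DmatInv_mul_apply]
      _ = rowDist V i j := by rw [hVW, rowDist_mul_of_mul_transpose_eq_one _ hW]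

/-- rank-deficient case of Lemma 2.3 (column clusters). -/
theorem stmt4
    (n L Ky Kz K' : ℕ) (hn : 0 < n) (hL : 0 < L)
    (ρ : ℝ) (hρ0 : 0 < ρ) (hρ1 : ρ ≤ 1)
    (gy : Fin n → Fin Ky) (gz : Fin n → Fin Kz)
    (hny : ∀ k, 0 < csize gy k) (hnz : ∀ k, 0 < csize gz k)
    (B : Fin L → Matrix (Fin Ky) (Fin Kz) ℝ)
    (hB : ∀ l a b, 0 ≤ B l a b ∧ B l a b ≤ 1)
    (P : Fin L → Matrix (Fin n) (Fin n) ℝ)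
    (hP : ∀ l, P l = ρ • (memb gy * B l * (memb gz)ᵀ))
    -- rank-deficient case: rank(∑ B_lᵀ B_l) = K' < K_z
    (hrank : (∑ l, (B l)ᵀ * B l).rank = K') (hKlt : K' < Kz)
    -- eigendecomposition ∑ P_lᵀ P_l = V Λ Vᵀ with V column-orthonormal, Λ invertible diagonal
    (V : Matrix (Fin n) (Fin K') ℝ) (hVorth : Vᵀ * V = 1)
    (d : Fin K' → ℝ) (hd : ∀ m, d m ≠ 0)
    (hdecomp : ∑ l, (P l)ᵀ * P l = V * Matrix.diagonal d * Vᵀ)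
    -- eigendecomposition Δ_z (∑ B_lᵀ Δ_y² B_l) Δ_z = Q^C D^C (Q^C)ᵀ,
    -- Q^C column-orthonormal, D^C invertible diagonal
    (QC : Matrix (Fin Kz) (Fin K') ℝ) (hQorth : QCᵀ * QC = 1)
    (dC : Fin K' → ℝ) (hdC : ∀ m, dC m ≠ 0)
    (hQdec : Dmat gz * (∑ l, (B l)ᵀ * (Dmat gy) ^ 2 * B l) * Dmat gz =
      QC * Matrix.diagonal dC * QCᵀ) :
    -- (i)
    (∀ i j : Fin n, memb gz i = memb gz j → V i = V j) ∧
    -- (ii)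
    (∀ ξ : ℝ, 0 < ξ →
      (∀ k k' : Fin Kz, k ≠ k' → (DmatInv gz * QC) k ≠ (DmatInv gz * QC) k') →
      (∀ k k' : Fin Kz, k ≠ k' →
        ξ ≤ Real.sqrt (∑ m, (QC k m / Real.sqrt (csize gz k) -
              QC k' m / Real.sqrt (csize gz k')) ^ 2)) →
      ∀ i j : Fin n, memb gz i ≠ memb gz j → ξ ≤ rowDist V i j) :=
  stmt4_general n L Ky Kz K' ρ gy gz hnz B P hP V hVorth d hd hdecomp QC hQorth dC hQdec
end
end

section
/- Consider a multi-layer ScBM with population matrices P_l = ρ Y B_l Zᵀ, and let K := rank(Σ_{l=1}^L B_l B_lᵀ). Then the matrix U := Y Δ_y^{-1} Q^R ∈ ℝ^{n×K} has orthonormal columns and satisfies Σ_{l=1}^L P_l P_lᵀ = ρ² · U D^R Uᵀ; in other words, the columns of Y Δ_y^{-1} Q^R form an orthonormal eigenbasis of Σ_{l=1}^L P_l P_lᵀ corresponding to its nonzero eigenvalues ρ² D^R_{11}, …, ρ² D^R_{KK}. -/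
/-!
`YᵀY = Δ_y²` and `ZᵀZ = Δ_z²`, so `Y Δ_y⁻¹` has orthonormal columns and
`∑ P_l P_lᵀ = ρ² Y (∑ B_l Δ_z² B_lᵀ) Yᵀ`. Conjugating the eigendecomposition of
`Δ_y (∑ B_l Δ_z² B_lᵀ) Δ_y` by `Δ_y⁻¹` turns this into `ρ² U D^R Uᵀ`, and `UᵀU = 1`
then makes the columns of `U` eigenvectors.
-/

open Matrix Finset
open scoped BigOperators Classical

noncomputable section

namespace Matrix

variable {m n k R : Type*} [Fintype m] [DecidableEq k] [CommSemiring R]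

theorem transpose_mul_self_mul_eq_one [Fintype n] [DecidableEq n] {A : Matrix m n R}
    {Q : Matrix n k R} (hA : Aᵀ * A = 1) (hQ : Qᵀ * Q = 1) : (A * Q)ᵀ * (A * Q) = 1 := by
  rw [transpose_mul, Matrix.mul_assoc, ← Matrix.mul_assoc Aᵀ, hA, Matrix.one_mul, hQ]

theorem smul_mul_diagonal_mul_transpose_mul {U : Matrix m k R} [Fintype k] (hU : Uᵀ * U = 1)
    (c : R) (d : k → R) :
    c • (U * diagonal d * Uᵀ) * U = U * diagonal fun i => c * d i := by
  rw [smul_mul, Matrix.mul_assoc, hU, Matrix.mul_one, ← Matrix.mul_smul, ← diagonal_smul]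
  rfl

end Matrix

section Clusters

variable {n K : ℕ} (g : Fin n → Fin K)

theorem memb_transpose_mul_memb :
    (memb g)ᵀ * memb g = diagonal fun k => (csize g k : ℝ) := by
  ext a b
  simp only [memb, mul_apply, transpose_apply, of_apply, mul_ite, mul_one, mul_zero, csize,
    diagonal_apply]
  split_ifs with hab
  · subst hab
    rw [Finset.card_filter]
    push_cast
    refine Finset.sum_congr rfl fun j _ => ?_
    split_ifs <;> rfl
  · refine Finset.sum_eq_zero fun j _ => ?_
    grind

theorem Dmat_sq_s14 : Dmat g ^ 2 = diagonal fun k => (csize g k : ℝ) := by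
  simp [sq, Dmat, diagonal_mul_diagonal]

theorem transpose_DmatInv : (DmatInv g)ᵀ = DmatInv g := diagonal_transpose _

theorem mul_memb_transpose_mul_transpose {m k : Type*} [Fintype k] (Y : Matrix m k ℝ)
    (B : Matrix k (Fin K) ℝ) :
    Y * B * (memb g)ᵀ * (Y * B * (memb g)ᵀ)ᵀ = Y * (B * Dmat g ^ 2 * Bᵀ) * Yᵀ := by
  simp only [transpose_mul, transpose_transpose, Matrix.mul_assoc]
  rw [← Matrix.mul_assoc (memb g)ᵀ, memb_transpose_mul_memb, Dmat_sq_s14]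

variable {g} (hg : ∀ k, 0 < csize g k)
include hg

theorem DmatInv_mul_Dmat_s14 : DmatInv g * Dmat g = 1 := by
  rw [DmatInv, Dmat, diagonal_mul_diagonal, ← diagonal_one]
  congr 1; ext k
  exact inv_mul_cancel₀ (Real.sqrt_ne_zero'.mpr (by exact_mod_cast hg k))

theorem Dmat_mul_DmatInv : Dmat g * DmatInv g = 1 := by
  rw [DmatInv, Dmat, diagonal_mul_diagonal, ← diagonal_one]
  congr 1; ext k
  exact mul_inv_cancel₀ (Real.sqrt_ne_zero'.mpr (by exact_mod_cast hg k))

theorem memb_mul_DmatInv_transpose_mul_self :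
    (memb g * DmatInv g)ᵀ * (memb g * DmatInv g) = 1 := by
  rw [transpose_mul, transpose_DmatInv, Matrix.mul_assoc, ← Matrix.mul_assoc (memb g)ᵀ,
    memb_transpose_mul_memb, ← Dmat_sq_s14, sq, ← Matrix.mul_assoc, ← Matrix.mul_assoc,
    DmatInv_mul_Dmat_s14 hg, Matrix.one_mul, Dmat_mul_DmatInv hg]

theorem memb_mul_mul_memb_transpose_of_Dmat_mul_mul_Dmat_eq {r : Type*} [Fintype r]
    {S : Matrix (Fin K) (Fin K) ℝ} {M : Matrix r r ℝ} {Q : Matrix (Fin K) r ℝ}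
    (hS : Dmat g * S * Dmat g = Q * M * Qᵀ) :
    memb g * S * (memb g)ᵀ =
      memb g * DmatInv g * Q * M * (memb g * DmatInv g * Q)ᵀ := by
  have hS' : S = DmatInv g * (Q * M * Qᵀ) * DmatInv g := by
    rw [← hS, ← Matrix.mul_assoc, ← Matrix.mul_assoc, DmatInv_mul_Dmat_s14 hg, Matrix.one_mul,
      Matrix.mul_assoc, Dmat_mul_DmatInv hg, Matrix.mul_one]
  rw [hS']
  simp only [transpose_mul, transpose_DmatInv, Matrix.mul_assoc]

end Clusters

theorem stmt14_general
    (n L Ky Kz K : ℕ)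
    (ρ : ℝ)
    (gy : Fin n → Fin Ky) (gz : Fin n → Fin Kz)
    (hny : ∀ k, 0 < csize gy k)
    (B : Fin L → Matrix (Fin Ky) (Fin Kz) ℝ)
    (P : Fin L → Matrix (Fin n) (Fin n) ℝ)
    (hP : ∀ l, P l = ρ • (memb gy * B l * (memb gz)ᵀ))
    -- eigendecomposition Δ_y (∑ B_l Δ_z² B_lᵀ) Δ_y = Q^R D^R (Q^R)ᵀ
    (QR : Matrix (Fin Ky) (Fin K) ℝ) (hQorth : QRᵀ * QR = 1)
    (dR : Fin K → ℝ)
    (hQdec : Dmat gy * (∑ l, B l * (Dmat gz) ^ 2 * (B l)ᵀ) * Dmat gy =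
      QR * Matrix.diagonal dR * QRᵀ)
    (U : Matrix (Fin n) (Fin K) ℝ)
    (hU : U = memb gy * DmatInv gy * QR) :
    -- U has orthonormal columns
    Uᵀ * U = 1 ∧
    -- ∑ P_l P_lᵀ = ρ² · U D^R Uᵀ
    (∑ l, P l * (P l)ᵀ) = (ρ ^ 2) • (U * Matrix.diagonal dR * Uᵀ) ∧
    -- the columns of U are eigenvectors with eigenvalues ρ² D^R_{mm}
    (∑ l, P l * (P l)ᵀ) * U = U * Matrix.diagonal (fun m => ρ ^ 2 * dR m) := by
  have hUU : Uᵀ * U = 1 :=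
    hU ▸ transpose_mul_self_mul_eq_one (memb_mul_DmatInv_transpose_mul_self hny) hQorth
  have hPP : ∑ l, P l * (P l)ᵀ =
      ρ ^ 2 • (memb gy * (∑ l, B l * Dmat gz ^ 2 * (B l)ᵀ) * (memb gy)ᵀ) := by
    simp only [hP, transpose_smul, smul_mul_smul_comm, ← sq, mul_memb_transpose_mul_transpose,
      Matrix.mul_sum, Matrix.sum_mul, Finset.smul_sum]
  have hPPU : ∑ l, P l * (P l)ᵀ = ρ ^ 2 • (U * diagonal dR * Uᵀ) := by
    rw [hPP, memb_mul_mul_memb_transpose_of_Dmat_mul_mul_Dmat_eq hny hQdec, hU]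
  refine ⟨hUU, hPPU, ?_⟩
  rw [hPPU]
  exact smul_mul_diagonal_mul_transpose_mul hUU (ρ ^ 2) dR

/-- the matrix U = Y Δ_y⁻¹ Q^R is a column-orthonormal eigenbasis
of ∑ P_l P_lᵀ with nonzero eigenvalues ρ² D^R_{mm}. -/
theorem stmt14
    (n L Ky Kz K : ℕ) (hn : 0 < n) (hL : 0 < L)
    (ρ : ℝ) (hρ0 : 0 < ρ) (hρ1 : ρ ≤ 1)
    (gy : Fin n → Fin Ky) (gz : Fin n → Fin Kz)
    (hny : ∀ k, 0 < csize gy k) (hnz : ∀ k, 0 < csize gz k)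
    (B : Fin L → Matrix (Fin Ky) (Fin Kz) ℝ)
    (hB : ∀ l a b, 0 ≤ B l a b ∧ B l a b ≤ 1)
    (P : Fin L → Matrix (Fin n) (Fin n) ℝ)
    (hP : ∀ l, P l = ρ • (memb gy * B l * (memb gz)ᵀ))
    -- K = rank(∑ B_l B_lᵀ)
    (hrank : (∑ l, B l * (B l)ᵀ).rank = K)
    -- eigendecomposition Δ_y (∑ B_l Δ_z² B_lᵀ) Δ_y = Q^R D^R (Q^R)ᵀ
    (QR : Matrix (Fin Ky) (Fin K) ℝ) (hQorth : QRᵀ * QR = 1)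
    (dR : Fin K → ℝ) (hdR : ∀ m, dR m ≠ 0)
    (hQdec : Dmat gy * (∑ l, B l * (Dmat gz) ^ 2 * (B l)ᵀ) * Dmat gy =
      QR * Matrix.diagonal dR * QRᵀ)
    (U : Matrix (Fin n) (Fin K) ℝ)
    (hU : U = memb gy * DmatInv gy * QR) :
    -- U has orthonormal columns
    Uᵀ * U = 1 ∧
    -- ∑ P_l P_lᵀ = ρ² · U D^R Uᵀ
    (∑ l, P l * (P l)ᵀ) = (ρ ^ 2) • (U * Matrix.diagonal dR * Uᵀ) ∧
    -- the columns of U are eigenvectors with eigenvalues ρ² D^R_{mm}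
    (∑ l, P l * (P l)ᵀ) * U = U * Matrix.diagonal (fun m => ρ ^ 2 * dR m) :=
  stmt14_general n L Ky Kz K ρ gy gz hny B P hP QR hQorth dR hQdec U hU
end
end
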